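/- If (X1,X2,X3) is a random vector with each Xi uniformly distributed on an alphabet of size v, pairwise independent, and H(X1,X2,X3) = 2·log v (equivalently, each variable is a function of the other two), then the support of (X1,X2,X3) is the set of rows of a VOA(U_{2,3}, v) (i.e., a Latin square of order v in orthogonal-array form) and (X1,X2,X3) is uniform on it. -/

import Mathlib

open Finset
open scoped BigOperators
noncomputable section

/-- Probability that the `A`-marginal of the random vector with joint pmf `p`
takes the same value as on `x`. -/
def margProb {n : ℕ} {m : Fin n → ℕ} (p : (∀ i, Fin (m i)) → ℝ)
    (A : Finset (Fin n)) (x : ∀ i, Fin (m i)) : ℝ :=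
  ∑ y : ∀ i, Fin (m i), if ∀ i ∈ A, y i = x i then p y else 0

/-- The Shannon entropy `H(X_A)` of the subvector indexed by `A`, for the random
vector with joint pmf `p`. -/
def jointEntropy {n : ℕ} {m : Fin n → ℕ} (p : (∀ i, Fin (m i)) → ℝ)
    (A : Finset (Fin n)) : ℝ :=
  -∑ x : ∀ i, Fin (m i), p x * Real.log (margProb p A x)

/-- `p` is a probability mass function. -/
def IsPMF {α : Type*} [Fintype α] (p : α → ℝ) : Prop :=
  (∀ x, 0 ≤ p x) ∧ ∑ x, p x = 1

/-- `h` is an entropy function of degree `n`: it arises as `A ↦ H(X_A)` for a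
random vector `(X_1, …, X_n)` on finite sets. -/
def IsEntropyFunc (n : ℕ) (h : Finset (Fin n) → ℝ) : Prop :=
  ∃ (m : Fin n → ℕ) (p : (∀ i, Fin (m i)) → ℝ), IsPMF p ∧ ∀ A, jointEntropy p A = h A

/-- Marginal probability of the single coordinate `i` taking value `x`. -/
def marg1 {n : ℕ} {m : Fin n → ℕ} (p : (∀ i, Fin (m i)) → ℝ)
    (i : Fin n) (x : Fin (m i)) : ℝ :=
  ∑ y : ∀ j, Fin (m j), if y i = x then p y else 0

/-- Marginal probability of the pair of coordinates `(i, j)` taking values `(x, y)`. -/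
def marg2 {n : ℕ} {m : Fin n → ℕ} (p : (∀ i, Fin (m i)) → ℝ)
    (i j : Fin n) (x : Fin (m i)) (y : Fin (m j)) : ℝ :=
  ∑ z : ∀ k, Fin (m k), if z i = x ∧ z j = y then p z else 0

/-!
Uniformity and pairwise independence make every pair marginal equal to `1/v²`, so every
atom has mass at most `s = 1/v²`. Then `∑ p x (log s - log p x)` is a sum of nonnegative
terms, and `H(X₁,X₂,X₃) = 2 log v = -log s` says it vanishes: every atom of positive mass
has mass exactly `s`. The pair marginal `s` at `(a, b)` is thus split among support points
of mass `s` each, so there is exactly one of them.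
-/

section Marginals

variable {n : ℕ} {m : Fin n → ℕ} (p : (∀ i, Fin (m i)) → ℝ)

theorem margProb_univ (x : ∀ i, Fin (m i)) : margProb p univ x = p x := by
  simp [margProb, ← funext_iff]

theorem jointEntropy_univ : jointEntropy p univ = -∑ x, p x * Real.log (p x) := by
  simp only [jointEntropy, margProb_univ]

variable {p}

theorem le_marg2 (hp : ∀ x, 0 ≤ p x) (x : ∀ i, Fin (m i)) (i j : Fin n) :
    p x ≤ marg2 p i j (x i) (x j) := by
  have := single_le_sum (f := fun z => if z i = x i ∧ z j = x j then p z else 0)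
    (fun z _ => by split <;> simp [hp z]) (mem_univ x)
  simpa [marg2] using this

open scoped Classical in
theorem marg2_eq_sum_support (hp : ∀ x, 0 ≤ p x) (i j : Fin n) (a : Fin (m i))
    (b : Fin (m j)) :
    marg2 p i j a b = ∑ x ∈ univ.filter (fun x => 0 < p x ∧ x i = a ∧ x j = b), p x := by
  rw [marg2, ← sum_filter, ← sum_filter_of_ne (p := fun x => 0 < p x)
    (fun x _ hne => (hp x).lt_of_ne hne.symm), filter_filter]
  congr 1
  ext x
  simp only [mem_filter, mem_univ, true_and]
  tauto

end Marginals

theorem IsPMF.eq_of_pos_of_le_of_sum_mul_log_eq {α : Type*} [Fintype α] {p : α → ℝ}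
    (hp : IsPMF p) {s : ℝ} (hle : ∀ x, p x ≤ s) (hent : ∑ x, p x * Real.log (p x) = Real.log s)
    {x : α} (hx : 0 < p x) : p x = s := by
  obtain ⟨hp0, hp1⟩ := hp
  have hnn : ∀ y ∈ (univ : Finset α), 0 ≤ p y * (Real.log s - Real.log (p y)) := by
    intro y _
    rcases (hp0 y).eq_or_lt with hy | hy
    · simp [← hy]
    · exact mul_nonneg (hp0 y) (sub_nonneg.mpr (Real.log_le_log hy (hle y)))
  have hsum : ∑ y, p y * (Real.log s - Real.log (p y)) = 0 := by
    simp only [mul_sub, sum_sub_distrib, ← sum_mul, hp1, hent, one_mul, sub_self]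
  have hterm := (sum_eq_zero_iff_of_nonneg hnn).mp hsum x (mem_univ x)
  have hlog : Real.log (p x) = Real.log s := by
    rcases mul_eq_zero.mp hterm with h | h
    · exact absurd h hx.ne'
    · linarith
  exact Real.log_injOn_pos hx (hx.trans_le (hle x)) hlog

theorem Finset.card_eq_one_of_sum_eq_of_forall_eq {α K : Type*} [Semifield K] [CharZero K]
    {T : Finset α} {f : α → K} {c : K} (hc : c ≠ 0) (hf : ∀ x ∈ T, f x = c) (hsum : ∑ x ∈ T, f x = c) : #T = 1 := by
  rw [sum_congr rfl hf, sum_const, nsmul_eq_mul] at hsum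
  exact_mod_cast (mul_eq_right₀ hc).mp hsum

open scoped Classical in
theorem statement19 (v : ℕ)
    (p : (∀ _ : Fin 3, Fin v) → ℝ)
    (hpmf : IsPMF (α := ∀ i : Fin 3, Fin ((fun _ => v) i)) p)
    (hunif : ∀ (i : Fin 3) (x : Fin v), marg1 (m := fun _ => v) p i x = (v : ℝ)⁻¹)
    (hind : ∀ i j : Fin 3, i ≠ j → ∀ x y : Fin v,
      marg2 (m := fun _ => v) p i j x y
        = marg1 (m := fun _ => v) p i x * marg1 (m := fun _ => v) p j y)
    (hent : jointEntropy (m := fun _ => v) p Finset.univ = 2 * Real.log v) :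
    (∀ x, 0 < p x → p x = (((v : ℝ) ^ 2))⁻¹) ∧
    (∀ i j : Fin 3, i ≠ j → ∀ a b : Fin v,
      (Finset.univ.filter (fun x : ∀ _ : Fin 3, Fin v => 0 < p x ∧ x i = a ∧ x j = b)).card
        = 1) := by
  have hmarg2 : ∀ i j : Fin 3, i ≠ j → ∀ a b : Fin v,
      marg2 (m := fun _ => v) p i j a b = ((v : ℝ) ^ 2)⁻¹ := by
    intro i j hij a b
    rw [hind i j hij, hunif, hunif, sq, mul_inv]
  have hsupp : ∀ x, 0 < p x → p x = ((v : ℝ) ^ 2)⁻¹ := fun x =>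
    hpmf.eq_of_pos_of_le_of_sum_mul_log_eq
      (fun y => (le_marg2 hpmf.1 y 0 1).trans_eq (hmarg2 0 1 (by decide) _ _))
      (by
        rw [Real.log_inv, Real.log_pow, Nat.cast_ofNat]
        linarith [jointEntropy_univ (m := fun _ => v) p])
  refine ⟨hsupp, fun i j hij a b => ?_⟩
  have hv : (0 : ℝ) < v := by exact_mod_cast a.pos
  exact card_eq_one_of_sum_eq_of_forall_eq (by positivity)
    (fun x hx => hsupp x (mem_filter.mp hx).2.1)
    ((marg2_eq_sum_support hpmf.1 i j a b).symm.trans (hmarg2 i j hij a b))
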